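/- Let R be a principal ideal domain that is not a field. The following are equivalent: (a) U(R) is not open in the Macías topology on R \ {0}; (b) the set of prime elements is dense in this topology; (c) R has infinitely many pairwise non-associate primes; (d) the Jacobson radical of R is zero. -/
import Mathlib

/-- For nonzero `k`, the basic set `σₖ⁰ = {s ≠ 0 : ⟨k⟩ + ⟨s⟩ = R}` of the Macías topology. -/
def sigma0 (R : Type*) [CommRing R] (k : R) : Set {x : R // x ≠ 0} :=
  {s | Ideal.span {k} + Ideal.span {s.1} = ⊤}

/-- The Macías topology on `R \ {0}`, generated by the sets `σₖ⁰` for `k ≠ 0`. -/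
def maciasTop (R : Type*) [CommRing R] : TopologicalSpace {x : R // x ≠ 0} :=
  TopologicalSpace.generateFrom {U | ∃ k : R, k ≠ 0 ∧ U = sigma0 R k}

section Aux

variable {R : Type*} [CommRing R] [IsDomain R] [IsPrincipalIdealRing R]

lemma mem_sigma0_iff {k : R} {s : {x : R // x ≠ 0}} :
    s ∈ sigma0 R k ↔ IsCoprime k s.1 := by
  rw [sigma0, Set.mem_setOf_eq, Submodule.add_eq_sup, ← Ideal.isCoprime_iff_sup_eq,
    Ideal.isCoprime_span_singleton_iff]

lemma one_mem_sigma0 (k : R) : (⟨1, one_ne_zero⟩ : {x : R // x ≠ 0}) ∈ sigma0 R k :=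
  mem_sigma0_iff.mpr isCoprime_one_right

lemma macias_basis :
    @TopologicalSpace.IsTopologicalBasis {x : R // x ≠ 0} (maciasTop R)
      {U | ∃ k : R, k ≠ 0 ∧ U = sigma0 R k} := by
  letI := maciasTop R
  refine ⟨?_, ?_, rfl⟩
  · rintro t₁ ⟨k, hk, rfl⟩ t₂ ⟨l, hl, rfl⟩ x ⟨hx1, hx2⟩
    refine ⟨sigma0 R (k * l), ⟨k * l, mul_ne_zero hk hl, rfl⟩, ?_, ?_⟩
    · exact mem_sigma0_iff.mpr ((mem_sigma0_iff.mp hx1).mul_left (mem_sigma0_iff.mp hx2))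
    · intro y hy
      have h := mem_sigma0_iff.mp hy
      exact ⟨mem_sigma0_iff.mpr h.of_mul_left_left, mem_sigma0_iff.mpr h.of_mul_left_right⟩
  · refine Set.eq_univ_of_forall fun x => ?_
    exact ⟨sigma0 R 1, ⟨1, one_ne_zero, rfl⟩, mem_sigma0_iff.mpr (isCoprime_one_left)⟩

/-- If there are finitely many prime classes, there is a nonzero element divisible by
every prime. -/
lemma exists_killer (hfin : (Associates.mk '' {p : R | Prime p}).Finite) :
    ∃ k : R, k ≠ 0 ∧ ∀ p : R, Prime p → p ∣ k := by
  classical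
  have hrep : ∀ a ∈ hfin.toFinset, ∃ p : R, Prime p ∧ Associates.mk p = a := by
    intro a ha
    rw [Set.Finite.mem_toFinset] at ha
    obtain ⟨p, hp, rfl⟩ := ha
    exact ⟨p, hp, rfl⟩
  choose f hf1 hf2 using hrep
  refine ⟨∏ a ∈ hfin.toFinset.attach, f a.1 a.2, ?_, ?_⟩
  · exact Finset.prod_ne_zero_iff.mpr fun a _ => (hf1 a.1 a.2).ne_zero
  · intro p hp
    have hmem : Associates.mk p ∈ hfin.toFinset := by
      rw [Set.Finite.mem_toFinset]; exact ⟨p, hp, rfl⟩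
    have : p ∣ f _ hmem := by
      have := hf2 _ hmem
      rw [Associates.mk_eq_mk_iff_associated] at this
      exact this.symm.dvd
    exact this.trans (Finset.dvd_prod_of_mem _ (Finset.mem_attach _ ⟨_, hmem⟩))

lemma coprime_of_prime_not_dvd {p k : R} (hp : Prime p) (h : ¬ p ∣ k) : IsCoprime k p := by
  have hmax := PrincipalIdealRing.isMaximal_of_irreducible hp.irreducible
  by_contra hc
  rw [← Ideal.isCoprime_span_singleton_iff, Ideal.isCoprime_iff_sup_eq] at hc
  have hle : Ideal.span {p} ≤ Ideal.span {k} ⊔ Ideal.span {p} := le_sup_right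
  have heq := hmax.eq_of_le hc hle
  have : Ideal.span {k} ≤ Ideal.span {p} := by
    exact (le_sup_left : Ideal.span {k} ≤ Ideal.span {k} ⊔ Ideal.span {p}).trans_eq heq.symm
  exact h (Ideal.span_singleton_le_span_singleton.mp this)

/-- If there are infinitely many prime classes, every nonzero element is coprime to some
prime. -/
lemma exists_coprime_prime (hinf : (Associates.mk '' {p : R | Prime p}).Infinite)
    {k : R} (hk : k ≠ 0) : ∃ p : R, Prime p ∧ IsCoprime k p := by
  classical
  have hsub : (Associates.mk '' {p : R | Prime p ∧ p ∣ k}).Finite := by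
    refine Set.Finite.subset (Set.Finite.image Associates.mk
      (UniqueFactorizationMonoid.factors k).toFinset.finite_toSet) ?_
    rintro _ ⟨p, ⟨hp, hpk⟩, rfl⟩
    obtain ⟨q, hq, hassoc⟩ :=
      UniqueFactorizationMonoid.exists_mem_factors_of_dvd hk hp.irreducible hpk
    exact ⟨q, by simpa using hq, (Associates.mk_eq_mk_iff_associated.mpr hassoc).symm⟩
  obtain ⟨a, ha, hnd⟩ := (hinf.diff hsub).nonempty
  obtain ⟨p, hp, rfl⟩ := ha
  refine ⟨p, hp, coprime_of_prime_not_dvd hp fun hdvd => hnd ⟨p, ⟨hp, hdvd⟩, rfl⟩⟩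

end Aux

theorem stmt14 (R : Type*) [CommRing R] [IsDomain R] [IsPrincipalIdealRing R]
    (hnf : ¬ IsField R) :
    [¬ @IsOpen _ (maciasTop R) {x : {x : R // x ≠ 0} | IsUnit x.1},
     @Dense _ (maciasTop R) {x : {x : R // x ≠ 0} | Prime x.1},
     (Associates.mk '' {p : R | Prime p}).Infinite,
     (⊥ : Ideal R).jacobson = ⊥].TFAE := by
  classical
  letI := maciasTop R
  have hb := (macias_basis (R := R))
  tfae_have 3 → 2 := by
    intro hinf
    rw [hb.dense_iff]
    rintro o ⟨k, hk, rfl⟩ -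
    obtain ⟨p, hp, hcop⟩ := exists_coprime_prime hinf hk
    exact ⟨⟨p, hp.ne_zero⟩, mem_sigma0_iff.mpr hcop, hp⟩
  tfae_have 2 → 3 := by
    intro hd
    by_contra hfin
    rw [Set.not_infinite] at hfin
    obtain ⟨k, hk, hkill⟩ := exists_killer hfin
    obtain ⟨x, hx1, hx2⟩ :=
      hb.dense_iff.mp hd (sigma0 R k) ⟨k, hk, rfl⟩ ⟨_, one_mem_sigma0 k⟩
    exact hx2.not_isUnit ((mem_sigma0_iff.mp hx1).isUnit_of_dvd' (hkill _ hx2) dvd_rfl)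
  tfae_have 3 → 1 := by
    intro hinf hopen
    obtain ⟨v, ⟨k, hk, rfl⟩, hxv, hsub⟩ :=
      hb.isOpen_iff.mp hopen ⟨1, one_ne_zero⟩ isUnit_one
    obtain ⟨p, hp, hcop⟩ := exists_coprime_prime hinf hk
    exact hp.not_isUnit (hsub (mem_sigma0_iff.mpr hcop : (⟨p, hp.ne_zero⟩ : {x : R // x ≠ 0}) ∈ _))
  tfae_have 1 → 3 := by
    intro h1
    by_contra hfin
    rw [Set.not_infinite] at hfin
    obtain ⟨k, hk, hkill⟩ := exists_killer hfin
    apply h1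
    have heq : {x : {x : R // x ≠ 0} | IsUnit x.1} = sigma0 R k := by
      ext s
      constructor
      · rintro ⟨u, hu⟩
        exact mem_sigma0_iff.mpr ⟨0, ↑u⁻¹, by simp [hu]⟩
      · intro hs
        by_contra hu
        obtain ⟨q, hq, hqd⟩ := WfDvdMonoid.exists_irreducible_factor hu s.2
        have hqp : Prime q := UniqueFactorizationMonoid.irreducible_iff_prime.mp hq
        exact hq.not_isUnit ((mem_sigma0_iff.mp hs).isUnit_of_dvd' (hkill q hqp) hqd)
    rw [heq]
    exact hb.isOpen ⟨k, hk, rfl⟩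
  tfae_have 3 → 4 := by
    intro hinf
    refine eq_bot_iff.mpr fun x hx => ?_
    rw [Ideal.mem_bot]
    by_contra hx0
    obtain ⟨p, hp, hcop⟩ := exists_coprime_prime hinf hx0
    have hmax := PrincipalIdealRing.isMaximal_of_irreducible hp.irreducible
    have hxp : x ∈ Ideal.span {p} := Ideal.mem_sInf.mp hx ⟨bot_le, hmax⟩
    have hdvd : p ∣ x := Ideal.mem_span_singleton.mp hxp
    exact hp.not_isUnit (hcop.isUnit_of_dvd' hdvd dvd_rfl)
  tfae_have 4 → 3 := by
    intro hj
    by_contra hfin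
    rw [Set.not_infinite] at hfin
    obtain ⟨k, hk, hkill⟩ := exists_killer hfin
    apply hk
    have hmem : k ∈ (⊥ : Ideal R).jacobson := by
      refine Ideal.mem_sInf.mpr ?_
      rintro J ⟨-, hJmax⟩
      have hJne : J ≠ ⊥ := by
        rintro rfl
        apply hnf
        refine ⟨exists_pair_ne R, mul_comm, fun {a} ha => ?_⟩
        by_cases hT : Ideal.span {a} = ⊤
        · obtain ⟨u, rfl⟩ := Ideal.span_singleton_eq_top.mp hT
          exact ⟨↑u⁻¹, u.mul_inv⟩
        · have hbot : (⊥ : Ideal R) = Ideal.span {a} := hJmax.eq_of_le hT bot_le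
          exact absurd (Ideal.span_singleton_eq_bot.mp hbot.symm) ha
      haveI := hJmax.isPrime
      have hgen : Prime (Submodule.IsPrincipal.generator J) :=
        Submodule.IsPrincipal.prime_generator_of_isPrime J hJne
      exact (Submodule.IsPrincipal.mem_iff_generator_dvd J).mpr (hkill _ hgen)
    rw [hj] at hmem
    exact Ideal.mem_bot.mp hmem
  tfae_finish
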